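/- Let F be a field of positive characteristic p and V a finite-dimensional F-vector space. Then every abelian regular subgroup of Aff(V) is a p-group of finite exponent; its exponent is a power of p. -/

import Mathlib

/-!
Sending `v` to the unique `g ∈ T` with `g 0 = v` identifies `T` with `V`, and the group law
becomes `v ∘ w = v + w + v • w`, where `v • w = (λ v - 1) w` and `λ v` is the linear part of that
`g`. Commutativity of `T` makes this product bilinear, commutative and associative, so the
operators `λ v - 1` form a commutative non-unital algebra in which every element is
quasi-invertible. Such an algebra lies in the Jacobson radical of the Artinian algebra it
generates, so every `N = λ v - 1` is nilpotent and `N ^ dim V = 0`. In characteristic `p`,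
`∑_{i < p^k} (1 + X)^i = X^(p^k - 1)`, hence `g ^ p^k` fixes `0` for `p ^ k > dim V`, and regularity
forces `g ^ p^k = 1`.
-/

open scoped IsMulCommutative in
theorem NonUnitalSubalgebra.isNilpotent_of_mem {F A : Type*} [Field F] [Ring A] [Algebra F A]
    [FiniteDimensional F A] (R : NonUnitalSubalgebra F A)
    (hcomm : ∀ x ∈ R, ∀ y ∈ R, x * y = y * x)
    (hinv : ∀ x ∈ R, ∃ y ∈ R, (1 + x) * (1 + y) = 1) {x : A} (hx : x ∈ R) :
    IsNilpotent x := by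
  have := Algebra.isMulCommutative_adjoin F hcomm
  have hideal {b : A} (hb : b ∈ Algebra.adjoin F (R : Set A)) : ∀ r ∈ R, r * b ∈ R := by
    induction hb using Algebra.adjoin_induction with
    | mem s hs => exact fun r hr => R.mul_mem hr hs
    | algebraMap c =>
      intro r hr
      rw [← Algebra.commutes, ← Algebra.smul_def]
      exact R.toSubmodule.smul_mem c hr
    | add y z _ _ hy hz => exact fun r hr => by rw [mul_add]; exact add_mem (hy r hr) (hz r hr)
    | mul y z _ _ hy hz => exact fun r hr => by rw [← mul_assoc]; exact hz _ (hy r hr)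
  have hjac : (⟨x, Algebra.subset_adjoin hx⟩ : Algebra.adjoin F (R : Set A)) ∈
      Ideal.jacobson ⊥ := by
    refine Ideal.mem_jacobson_bot.mpr fun b => ?_
    obtain ⟨y, hy, hxy⟩ := hinv _ (hideal b.2 x hx)
    refine isUnit_iff_exists_inv.mpr ⟨1 + ⟨y, Algebra.subset_adjoin hy⟩, Subtype.ext ?_⟩
    simpa [add_comm] using hxy
  have : IsArtinianRing (Algebra.adjoin F (R : Set A)) := IsArtinianRing.of_finite F _
  rw [IsArtinianRing.jacobson_eq_radical] at hjac
  exact (mem_nilradical.mp hjac).map (Algebra.adjoin F (R : Set A)).val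

open Polynomial in
theorem geom_sum_one_add_pow_char_pow {R A : Type*} [CommRing R] [Ring A] [Algebra R A]
    (p : ℕ) [Fact p.Prime] [CharP R p] (m : ℕ) (a : A) :
    ∑ i ∈ Finset.range (p ^ m), (1 + a) ^ i = a ^ (p ^ m - 1) := by
  have hX : ∑ i ∈ Finset.range (p ^ m), (1 + X : R[X]) ^ i = X ^ (p ^ m - 1) := by
    refine (isRegular_X (R := R)).right ?_
    have h := geom_sum_mul (1 + X : R[X]) (p ^ m)
    rw [add_sub_cancel_left, add_pow_char_pow, one_pow, add_sub_cancel_left] at h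
    simp only [h, ← pow_succ, Nat.sub_add_cancel (Nat.one_le_pow _ _ (Fact.out : p.Prime).pos)]
  simpa using congrArg (aeval a) hX

theorem IsNilpotent.pow_finrank_eq_zero {F V : Type*} [Field F] [AddCommGroup V]
    [Module F V] [FiniteDimensional F V] {φ : Module.End F V} (h : IsNilpotent φ) :
    φ ^ Module.finrank F V = 0 := by
  simpa [h.charpoly_eq_X_pow_finrank] using φ.aeval_self_charpoly

section

variable {F V : Type*} [Field F] [AddCommGroup V] [Module F V]

theorem AffineEquiv.apply_eq_linear_add_apply_zero (g : V ≃ᵃ[F] V) (x : V) :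
    g x = g.linear x + g 0 := by
  simpa using g.map_vadd 0 x

theorem AffineEquiv.pow_apply_zero (g : V ≃ᵃ[F] V) (n : ℕ) :
    (g ^ n) 0 = (∑ i ∈ Finset.range n, (g.linear : Module.End F V) ^ i) (g 0) := by
  induction n with
  | zero => simp
  | succ n ih =>
    rw [pow_succ', AffineEquiv.coe_mul, Function.comp_apply, ih, Finset.sum_range_succ',
      pow_zero, g.apply_eq_linear_add_apply_zero]
    simp [pow_succ', LinearMap.sum_apply]

variable {T : Subgroup (V ≃ᵃ[F] V)}

noncomputable def regularElt (hreg : ∀ v : V, ∃! g : V ≃ᵃ[F] V, g ∈ T ∧ g 0 = v) (v : V) :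
    V ≃ᵃ[F] V :=
  (hreg v).exists.choose

noncomputable def radicalMul (hreg : ∀ v : V, ∃! g : V ≃ᵃ[F] V, g ∈ T ∧ g 0 = v) (v : V) :
    Module.End F V :=
  (regularElt hreg v).linear - 1

variable (hreg : ∀ v : V, ∃! g : V ≃ᵃ[F] V, g ∈ T ∧ g 0 = v)

theorem regularElt_mem (v : V) : regularElt hreg v ∈ T := (hreg v).exists.choose_spec.1

theorem regularElt_apply_zero (v : V) : regularElt hreg v 0 = v :=
  (hreg v).exists.choose_spec.2

theorem regularElt_eq_of_mem {g : V ≃ᵃ[F] V} (hg : g ∈ T) : regularElt hreg (g 0) = g :=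
  (hreg (g 0)).unique ⟨regularElt_mem hreg _, regularElt_apply_zero hreg _⟩ ⟨hg, rfl⟩

theorem regularElt_linear (v : V) :
    ((regularElt hreg v).linear : Module.End F V) = 1 + radicalMul hreg v := by
  simp [radicalMul]

theorem regularElt_apply (v w : V) : regularElt hreg v w = v + w + radicalMul hreg v w := by
  rw [AffineEquiv.apply_eq_linear_add_apply_zero, regularElt_apply_zero, ← LinearEquiv.coe_coe,
    regularElt_linear]
  simp only [LinearMap.add_apply, Module.End.one_apply]
  abel

theorem regularElt_mul (v w : V) :
    regularElt hreg v * regularElt hreg w = regularElt hreg (regularElt hreg v w) := by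
  rw [← regularElt_eq_of_mem hreg (mul_mem (regularElt_mem hreg v) (regularElt_mem hreg w)),
    AffineEquiv.coe_mul, Function.comp_apply, regularElt_apply_zero]

theorem radicalMul_zero : radicalMul hreg 0 = 0 := by
  have h : regularElt hreg 0 = 1 := regularElt_eq_of_mem hreg T.one_mem
  rw [radicalMul, h]
  exact sub_self _

theorem one_add_radicalMul_mul (v w : V) :
    (1 + radicalMul hreg v) * (1 + radicalMul hreg w) =
      1 + radicalMul hreg (regularElt hreg v w) := by
  simp only [← regularElt_linear, ← regularElt_mul]
  rfl

theorem radicalMul_comm (hcomm : ∀ g ∈ T, ∀ h ∈ T, g * h = h * g) (v w : V) :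
    radicalMul hreg v w = radicalMul hreg w v := by
  have h := congrArg (· 0) (hcomm _ (regularElt_mem hreg v) _ (regularElt_mem hreg w))
  simp only [AffineEquiv.coe_mul, Function.comp_apply, regularElt_apply_zero] at h
  rw [regularElt_apply, regularElt_apply, add_comm v w] at h
  exact add_left_cancel h

theorem radicalMul_add (hcomm : ∀ g ∈ T, ∀ h ∈ T, g * h = h * g) (a b : V) :
    radicalMul hreg (a + b) = radicalMul hreg a + radicalMul hreg b := by
  ext c
  simp only [LinearMap.add_apply, radicalMul_comm hreg hcomm _ c, map_add]

theorem radicalMul_smul (hcomm : ∀ g ∈ T, ∀ h ∈ T, g * h = h * g) (t : F) (a : V) :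
    radicalMul hreg (t • a) = t • radicalMul hreg a := by
  ext c
  simp only [LinearMap.smul_apply, radicalMul_comm hreg hcomm _ c, map_smul]

noncomputable def radicalMulₗ (hcomm : ∀ g ∈ T, ∀ h ∈ T, g * h = h * g) :
    V →ₗ[F] Module.End F V where
  toFun := radicalMul hreg
  map_add' := radicalMul_add hreg hcomm
  map_smul' := radicalMul_smul hreg hcomm

theorem radicalMulₗ_apply (hcomm : ∀ g ∈ T, ∀ h ∈ T, g * h = h * g) (v : V) :
    radicalMulₗ hreg hcomm v = radicalMul hreg v :=
  rfl

theorem radicalMul_radicalMul (hcomm : ∀ g ∈ T, ∀ h ∈ T, g * h = h * g) (v w : V) :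
    radicalMul hreg (radicalMul hreg v w) = radicalMul hreg v * radicalMul hreg w := by
  have h := one_add_radicalMul_mul hreg v w
  rw [regularElt_apply, radicalMul_add hreg hcomm, radicalMul_add hreg hcomm] at h
  linear_combination (norm := skip) -h
  noncomm_ring

noncomputable def radicalSubalgebra (hcomm : ∀ g ∈ T, ∀ h ∈ T, g * h = h * g) :
    NonUnitalSubalgebra F (Module.End F V) :=
  { LinearMap.range (radicalMulₗ hreg hcomm) with
    mul_mem' := by
      rintro _ _ ⟨v, rfl⟩ ⟨w, rfl⟩
      exact ⟨radicalMul hreg v w, radicalMul_radicalMul hreg hcomm v w⟩ }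

theorem isNilpotent_radicalMul [FiniteDimensional F V]
    (hcomm : ∀ g ∈ T, ∀ h ∈ T, g * h = h * g) (v : V) :
    IsNilpotent (radicalMul hreg v) := by
  refine (radicalSubalgebra hreg hcomm).isNilpotent_of_mem ?_ ?_ ⟨v, rfl⟩
  · rintro _ ⟨v, rfl⟩ _ ⟨w, rfl⟩
    simp only [radicalMulₗ_apply, ← radicalMul_radicalMul hreg hcomm,
      radicalMul_comm hreg hcomm v w]
  · rintro _ ⟨v, rfl⟩
    refine ⟨_, ⟨(regularElt hreg v)⁻¹ 0, rfl⟩, ?_⟩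
    rw [radicalMulₗ_apply, radicalMulₗ_apply, one_add_radicalMul_mul, AffineEquiv.inv_def,
      AffineEquiv.apply_symm_apply, radicalMul_zero, add_zero]

end

theorem stmt {F V : Type*} [Field F] [AddCommGroup V] [Module F V]
    [FiniteDimensional F V] (p : ℕ) [Fact p.Prime] [CharP F p]
    (T : Subgroup (V ≃ᵃ[F] V))
    (hcomm : ∀ g ∈ T, ∀ h ∈ T, g * h = h * g)
    (hreg : ∀ v : V, ∃! g : V ≃ᵃ[F] V, g ∈ T ∧ g 0 = v) :
    ∃ k : ℕ, ∀ g ∈ T, g ^ (p ^ k) = 1 := by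
  set n := Module.finrank F V
  refine ⟨n, fun g hg => (hreg 0).unique ⟨pow_mem hg _, ?_⟩ ⟨T.one_mem, rfl⟩⟩
  have hnil : radicalMul hreg (g 0) ^ n = 0 :=
    (isNilpotent_radicalMul hreg hcomm (g 0)).pow_finrank_eq_zero
  have hn : n ≤ p ^ n - 1 := Nat.le_sub_one_of_lt (Nat.lt_pow_self (Fact.out : p.Prime).one_lt)
  have hsum : ∑ i ∈ Finset.range (p ^ n), (1 + radicalMul hreg (g 0)) ^ i = 0 := by
    rw [geom_sum_one_add_pow_char_pow (R := F) p, ← Nat.sub_add_cancel hn, pow_add, hnil,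
      mul_zero]
  rw [AffineEquiv.pow_apply_zero, ← regularElt_eq_of_mem hreg hg, regularElt_linear, hsum,
    LinearMap.zero_apply]
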